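/- arXiv:math/0205074 — 6 statements merged into one kernel-verified Lean document; each statement's English description precedes it below -/
import Mathlib

section
/- Let V be a real inner product space of signature (p,q) with p+q≥3, and let R be an algebraic curvature tensor on V. If for every pair of orthonormal vectors x₁, x₂ (i.e. (x₁,x₁)=(x₂,x₂)=1, (x₁,x₂)=0 after complexification) the trace of the Jacobi operator vanishes on the complex null vectors x₁±i x₂, then trace J_R(x₁) = trace J_R(x₂). Consequently, if trace{J_R(·)} = 0 on all complex null vectors, then R is Einstein, i.e. there is a constant c with ρ_R(x,y) = c(x,y) for all x,y. -/
/-!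
Since `ρ(x, x) = tr J(x)`, only the quadratic form of `ρ` enters. Expanding,
`ρ(x ± i y, x ± i y) = ρ(x, x) - ρ(y, y) ± 2i ρ(x, y)`, so if both vanish then
`ρ(x, x) = ρ(y, y)` and `ρ(x, y) = 0`. Over `ℂ` a nondegenerate symmetric form has an
orthonormal basis `(wᵢ)`, and every `wᵢ ± i wⱼ` with `i ≠ j` is null; so in this basis `ρ` is
diagonal with constant diagonal, i.e. `ρ = c B`.
-/
open LinearMap (BilinForm)

namespace LinearMap.BilinForm

theorem apply_add_smul_self {R M : Type*} [CommRing R] [AddCommGroup M] [Module R M]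
    {B : BilinForm R M} (hB : B.IsSymm) (t : R) (x y : M) :
    B (x + t • y) (x + t • y) = B x x + 2 * t * B x y + t ^ 2 * B y y := by
  simp only [map_add, map_smul, LinearMap.add_apply, LinearMap.smul_apply, smul_eq_mul]
  linear_combination t * hB.eq y x

theorem apply_eq_zero_and_apply_self_eq_of_null_add_sub_I_smul {V : Type*} [AddCommGroup V]
    [Module ℂ V] {ρ : BilinForm ℂ V} (hρ : ρ.IsSymm) {x y : V}
    (hadd : ρ (x + Complex.I • y) (x + Complex.I • y) = 0)
    (hsub : ρ (x - Complex.I • y) (x - Complex.I • y) = 0) :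
    ρ x y = 0 ∧ ρ x x = ρ y y := by
  rw [sub_eq_add_neg, ← neg_smul] at hsub
  rw [apply_add_smul_self hρ] at hadd hsub
  have hI : Complex.I ^ 2 = -1 := Complex.I_sq
  refine ⟨?_, by linear_combination (hadd + hsub) / 2 - ρ y y * hI⟩
  have h4 : (4 * Complex.I) * ρ x y = 0 := by linear_combination hadd - hsub
  exact (mul_eq_zero.mp h4).resolve_left (by simp)

theorem exists_basis_isOrthoᵢ_and_apply_self_eq_one {K V : Type*} [Field K] [IsAlgClosed K]
    [Invertible (2 : K)] [AddCommGroup V] [Module K V] [FiniteDimensional K V]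
    {B : BilinForm K V} (hB : B.IsSymm) (hBnd : B.Nondegenerate) :
    ∃ w : Module.Basis (Fin (Module.finrank K V)) K V,
      B.IsOrthoᵢ w ∧ ∀ i, B (w i) (w i) = 1 := by
  obtain ⟨v, hv⟩ := exists_orthogonal_basis (isSymm_iff.mp hB)
  have hvne i : B (v i) (v i) ≠ 0 := hv.not_isOrtho_basis_self_of_separatingLeft hBnd.1 i
  choose s hs using fun i ↦ IsAlgClosed.exists_eq_mul_self (B (v i) (v i))⁻¹
  have hs0 i : s i ≠ 0 := by
    rintro h
    simpa [h, hvne i] using hs i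
  refine ⟨v.unitsSMul fun i ↦ Units.mk0 (s i) (hs0 i),
    isOrthoᵢ_def.mpr fun i j hij ↦ ?_, fun i ↦ ?_⟩
  · simp only [Module.Basis.unitsSMul_apply, Units.smul_mk0, map_smul, LinearMap.smul_apply,
      smul_eq_mul]
    rw [hv hij, mul_zero, mul_zero]
  · simp only [Module.Basis.unitsSMul_apply, Units.smul_mk0, map_smul, LinearMap.smul_apply,
      smul_eq_mul]
    rw [← mul_assoc, ← hs i, inv_mul_cancel₀ (hvne i)]

theorem exists_eq_smul_of_apply_self_eq_zero_of_null {V : Type*} [AddCommGroup V] [Module ℂ V]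
    [FiniteDimensional ℂ V] {B ρ : BilinForm ℂ V} (hB : B.IsSymm) (hBnd : B.Nondegenerate)
    (hρ : ρ.IsSymm) (hnull : ∀ v, B v v = 0 → ρ v v = 0) : ∃ c : ℂ, ρ = c • B := by
  obtain ⟨w, hwo, hww⟩ := exists_basis_isOrthoᵢ_and_apply_self_eq_one hB hBnd
  have hpair {i j} (hij : i ≠ j) : ρ (w i) (w j) = 0 ∧ ρ (w i) (w i) = ρ (w j) (w j) := by
    have hBpair (t : ℂ) (ht : t ^ 2 = -1) : B (w i + t • w j) (w i + t • w j) = 0 := by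
      rw [apply_add_smul_self hB, hww, hww, hwo hij, ht]
      ring
    refine apply_eq_zero_and_apply_self_eq_of_null_add_sub_I_smul hρ
      (hnull _ (hBpair _ Complex.I_sq)) (hnull _ ?_)
    rw [sub_eq_add_neg, ← neg_smul]
    exact hBpair _ (by rw [neg_sq, Complex.I_sq])
  obtain ⟨c, hc⟩ : ∃ c, ∀ i, ρ (w i) (w i) = c := by
    rcases isEmpty_or_nonempty (Fin (Module.finrank ℂ V)) with hι | ⟨⟨i₀⟩⟩
    · exact ⟨0, hι.elim⟩
    · refine ⟨ρ (w i₀) (w i₀), fun i ↦ ?_⟩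
      rcases eq_or_ne i i₀ with rfl | hi
      · rfl
      · exact (hpair hi).2
  refine ⟨c, LinearMap.ext_basis w w fun i j ↦ ?_⟩
  rcases eq_or_ne i j with rfl | hij
  · simp [hc, hww]
  · simp [(hpair hij).1, hwo hij]

end LinearMap.BilinForm

open LinearMap.BilinForm in
theorem jacobi_trace_null_implies_einstein_general
    (V : Type*) [AddCommGroup V] [Module ℂ V] [FiniteDimensional ℂ V]
    (B : LinearMap.BilinForm ℂ V) (hBsymm : ∀ x y, B x y = B y x)
    (hBnd : B.Nondegenerate)
    (J : V → Module.End ℂ V)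
    (ρ : LinearMap.BilinForm ℂ V) (hρsymm : ∀ x y, ρ x y = ρ y x)
    (hρ : ∀ x, ρ x x = LinearMap.trace ℂ V (J x)) :
    (∀ x₁ x₂ : V, B x₁ x₁ = 1 → B x₂ x₂ = 1 → B x₁ x₂ = 0 →
      LinearMap.trace ℂ V (J (x₁ + Complex.I • x₂)) = 0 →
      LinearMap.trace ℂ V (J (x₁ - Complex.I • x₂)) = 0 →
      LinearMap.trace ℂ V (J x₁) = LinearMap.trace ℂ V (J x₂)) ∧
    ((∀ v : V, B v v = 0 → LinearMap.trace ℂ V (J v) = 0) →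
      ∃ c : ℂ, ∀ x y, ρ x y = c * B x y) := by
  simp only [← hρ]
  refine ⟨fun x₁ x₂ _ _ _ hadd hsub ↦
    (apply_eq_zero_and_apply_self_eq_of_null_add_sub_I_smul ⟨hρsymm⟩ hadd hsub).2,
    fun hnull ↦ ?_⟩
  obtain ⟨c, rfl⟩ :=
    exists_eq_smul_of_apply_self_eq_zero_of_null ⟨hBsymm⟩ hBnd ⟨hρsymm⟩ hnull
  exact ⟨c, fun x y ↦ rfl⟩

/-- If the trace of the Jacobi operator of an algebraic curvature tensor vanishes on
complex null vectors, then the tensor is Einstein.  We work on the complexification,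
modelled as a complex vector space `V` with a symmetric nondegenerate bilinear form. -/
theorem jacobi_trace_null_implies_einstein
    (V : Type*) [AddCommGroup V] [Module ℂ V] [FiniteDimensional ℂ V]
    (hdim : 3 ≤ Module.finrank ℂ V)
    (B : LinearMap.BilinForm ℂ V) (hBsymm : ∀ x y, B x y = B y x)
    (hBnd : B.Nondegenerate)
    (R : V →ₗ[ℂ] V →ₗ[ℂ] V →ₗ[ℂ] V →ₗ[ℂ] ℂ)
    (hR1 : ∀ x y z w, R x y z w = R z w x y)
    (hR2 : ∀ x y z w, R x y z w = - R y x z w)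
    (hR3 : ∀ x y z w, R x y z w + R y z x w + R z x y w = 0)
    (J : V → Module.End ℂ V)
    (hJ : ∀ x y w, B (J x y) w = R y x x w)
    (ρ : LinearMap.BilinForm ℂ V) (hρsymm : ∀ x y, ρ x y = ρ y x)
    (hρ : ∀ x, ρ x x = LinearMap.trace ℂ V (J x)) :
    (∀ x₁ x₂ : V, B x₁ x₁ = 1 → B x₂ x₂ = 1 → B x₁ x₂ = 0 →
      LinearMap.trace ℂ V (J (x₁ + Complex.I • x₂)) = 0 →
      LinearMap.trace ℂ V (J (x₁ - Complex.I • x₂)) = 0 →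
      LinearMap.trace ℂ V (J x₁) = LinearMap.trace ℂ V (J x₂)) ∧
    ((∀ v : V, B v v = 0 → LinearMap.trace ℂ V (J v) = 0) →
      ∃ c : ℂ, ∀ x y, ρ x y = c * B x y) :=
  jacobi_trace_null_implies_einstein_general V B hBsymm hBnd J ρ hρsymm hρ
end

section
/- Let R be an algebraic curvature tensor on a Lorentzian vector space V (signature (1,q), dimension ≥ 3). If trace{J_R(x)²} = 0 for every complex null vector x, then R has constant sectional curvature, i.e. there exists a constant c with R(x,y,z,w) = c{(x,w)(y,z) - (x,z)(y,w)} for all x,y,z,w. -/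
/-!
For a real unit vector `u ⊥ e₀` the vector `v = e₀ + u` is null, and its Jacobi matrix
`F_{ab} = R(eₐ, v, v, e_b)` is real, symmetric and kills `v`. Lagrange's identity, applied first
to the rows and then to the columns of `F`, writes `tr J(v)² = ∑ εₐ ε_b F_{ab}²` as a sum of
squares, all of which must then vanish. Taking `u = ±eᵢ` and `u = ±(3eᵢ + 4eⱼ)/5` gives enough
linear relations among the real components of `R` to force
`R_{abcd} = κ (g_{ad} g_{bc} - g_{ac} g_{bd})`.
-/

open Finset

lemma sum_sum_mul_sub_mul_sq {κ : Type*} [Fintype κ] (u g : κ → ℝ) :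
    ∑ b, ∑ c, (u b * g c - u c * g b) ^ 2
      = 2 * ((∑ b, u b ^ 2) * ∑ c, g c ^ 2 - (∑ b, u b * g b) ^ 2) := by
  have expand : ∀ b c, (u b * g c - u c * g b) ^ 2
      = u b ^ 2 * g c ^ 2 + u c ^ 2 * g b ^ 2 - 2 * (u b * g b) * (u c * g c) := fun b c => by ring
  simp only [expand, sum_add_distrib, sum_sub_distrib, ← mul_sum, ← sum_mul, sq (∑ b, u b * g b)]
  ring

lemma sum_sum_mul_mul_eq_zero_of_antisymm {κ : Type*} [Fintype κ] (v : κ → ℝ) {f : κ → κ → ℝ}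
    (hf : ∀ b c, f b c = -f c b) : ∑ b, ∑ c, v b * v c * f b c = 0 := by
  have h : ∑ b, ∑ c, v b * v c * f b c = -∑ b, ∑ c, v b * v c * f b c := by
    conv_rhs => rw [sum_comm]
    simp only [← sum_neg_distrib]
    exact sum_congr rfl fun b _ => sum_congr rfl fun c _ => by rw [hf]; ring
  linarith

section Minkowski

variable {n : ℕ}

def minkowskiSign (a : Fin (n + 1)) : ℝ := if a = 0 then -1 else 1

@[simp] lemma minkowskiSign_zero : minkowskiSign (0 : Fin (n + 1)) = -1 := if_pos rfl

@[simp] lemma minkowskiSign_succ (k : Fin n) : minkowskiSign k.succ = 1 :=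
  if_neg k.succ_ne_zero

lemma sum_minkowskiSign_mul (f : Fin (n + 1) → ℝ) :
    ∑ a, minkowskiSign a * f a = -f 0 + ∑ k : Fin n, f k.succ := by
  simp [Fin.sum_univ_succ]

/-- The coordinates of `u ∧ f'`, where `f'` is the spacelike part of `f`. -/
def wedgeCoord (u : Fin n → ℝ) (f : Fin (n + 1) → ℝ) (p : Fin n × Fin n) : ℝ :=
  u p.1 * f p.2.succ - u p.2 * f p.1.succ

lemma sum_minkowskiSign_mul_sq_eq {u : Fin n → ℝ} (hu : ∑ k, u k ^ 2 = 1)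
    {f : Fin (n + 1) → ℝ} (hf : f 0 + ∑ k, u k * f k.succ = 0) :
    ∑ a, minkowskiSign a * f a ^ 2 = (∑ p, wedgeCoord u f p ^ 2) / 2 := by
  rw [sum_minkowskiSign_mul, Fintype.sum_prod_type]
  simp only [wedgeCoord]
  rw [sum_sum_mul_sub_mul_sq, hu, ← neg_eq_of_add_eq_zero_left hf]
  ring

lemma wedgeCoord_wedgeCoord_eq_zero {u : Fin n → ℝ} (hu : ∑ k, u k ^ 2 = 1)
    {F : Fin (n + 1) → Fin (n + 1) → ℝ} (hF : ∀ a b, F a b = F b a)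
    (hrow : ∀ a, F a 0 + ∑ k, u k * F a k.succ = 0)
    (h : ∑ a, ∑ b, minkowskiSign a * minkowskiSign b * F a b ^ 2 = 0) (p p' : Fin n × Fin n) :
    wedgeCoord u (fun a => wedgeCoord u (F a) p) p' = 0 := by
  have hcol (p : Fin n × Fin n) :
      wedgeCoord u (F 0) p + ∑ k, u k * wedgeCoord u (F k.succ) p = 0 := by
    have expand : ∀ k, u k * wedgeCoord u (F k.succ) p
        = u p.1 * (u k * F p.2.succ k.succ) - u p.2 * (u k * F p.1.succ k.succ) := fun k => by
      rw [wedgeCoord, hF k.succ, hF k.succ]; ring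
    rw [sum_congr rfl fun k _ => expand k, sum_sub_distrib, ← mul_sum, ← mul_sum, wedgeCoord,
      hF 0, hF 0]
    linear_combination u p.1 * hrow p.2.succ - u p.2 * hrow p.1.succ
  have hsum : ∑ a, ∑ b, minkowskiSign a * minkowskiSign b * F a b ^ 2
      = (∑ p, ∑ p', wedgeCoord u (fun a => wedgeCoord u (F a) p) p' ^ 2) / 4 :=
    calc ∑ a, ∑ b, minkowskiSign a * minkowskiSign b * F a b ^ 2
        = ∑ a, minkowskiSign a * ((∑ p, wedgeCoord u (F a) p ^ 2) / 2) := by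
          simp only [mul_assoc, ← mul_sum, sum_minkowskiSign_mul_sq_eq hu (hrow _)]
      _ = (∑ p, ∑ a, minkowskiSign a * wedgeCoord u (F a) p ^ 2) / 2 := by
          rw [sum_comm, sum_div]; simp only [mul_div_assoc', ← sum_div, mul_sum]
      _ = (∑ p, (∑ p', wedgeCoord u (fun a => wedgeCoord u (F a) p) p' ^ 2) / 2) / 2 := by
          congr 1
          exact sum_congr rfl fun p _ =>
            sum_minkowskiSign_mul_sq_eq (f := fun a => wedgeCoord u (F a) p) hu (hcol p)
      _ = _ := by rw [← sum_div]; ring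
  rw [hsum, div_eq_zero_iff, ← Fintype.sum_prod_type'] at h
  have := (Fintype.sum_eq_zero_iff_of_nonneg fun _ => sq_nonneg _).1
    (h.resolve_right four_ne_zero)
  exact pow_eq_zero_iff two_ne_zero |>.1 (congrFun this (p, p'))

lemma apply_succ_succ_eq_zero_of_wedgeCoord {u : Fin n → ℝ} (hu : ∑ k, u k ^ 2 = 1)
    {F : Fin (n + 1) → Fin (n + 1) → ℝ}
    (hF : ∀ p p', wedgeCoord u (fun a => wedgeCoord u (F a) p) p' = 0)
    {b c : Fin n} (hb : u b = 0) (hc : u c = 0) : F b.succ c.succ = 0 :=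
  calc F b.succ c.succ = ∑ i, u i ^ 2 * F b.succ c.succ := by rw [← sum_mul, hu, one_mul]
    _ = ∑ i, wedgeCoord u (fun a => wedgeCoord u (F a) (i, c)) (i, b) :=
        sum_congr rfl fun i _ => by simp only [wedgeCoord, hb, hc]; ring
    _ = 0 := sum_eq_zero fun i _ => hF _ _

end Minkowski

structure IsCurvatureArray {ι : Type*} (ρ : ι → ι → ι → ι → ℝ) : Prop where
  pair_comm : ∀ a b c d, ρ a b c d = ρ c d a b
  antisymm_left : ∀ a b c d, ρ a b c d = -ρ b a c d
  bianchi : ∀ a b c d, ρ a b c d + ρ b c a d + ρ c a b d = 0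

def jacobiMatrix {ι : Type*} [Fintype ι] (ρ : ι → ι → ι → ι → ℝ) (v : ι → ℝ) (a b : ι) : ℝ :=
  ∑ c, ∑ d, v c * v d * ρ a c d b

lemma jacobiMatrix_cons_single_add_single {n : ℕ}
    (ρ : Fin (n + 1) → Fin (n + 1) → Fin (n + 1) → Fin (n + 1) → ℝ) (i j : Fin n) (s t : ℝ)
    (a b : Fin (n + 1)) :
    jacobiMatrix ρ (Fin.cons 1 (Pi.single i s + Pi.single j t)) a b
      = ρ a 0 0 b + s * (ρ a 0 i.succ b + ρ a i.succ 0 b) + t * (ρ a 0 j.succ b + ρ a j.succ 0 b)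
        + s ^ 2 * ρ a i.succ i.succ b + s * t * (ρ a i.succ j.succ b + ρ a j.succ i.succ b)
        + t ^ 2 * ρ a j.succ j.succ b := by
  simp [jacobiMatrix, Fin.sum_univ_succ, Pi.single_apply, add_mul, mul_add, sum_add_distrib]
  ring

def IsNullJacobiTraceFree {n : ℕ} (ρ : Fin (n + 1) → Fin (n + 1) → Fin (n + 1) → Fin (n + 1) → ℝ) :
    Prop :=
  ∀ v : Fin (n + 1) → ℝ, ∑ a, minkowskiSign a * v a ^ 2 = 0 →
    ∑ a, ∑ b, minkowskiSign a * minkowskiSign b * jacobiMatrix ρ v a b ^ 2 = 0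

namespace IsCurvatureArray

section General

variable {ι : Type*} {ρ : ι → ι → ι → ι → ℝ}

lemma antisymm_right (hρ : IsCurvatureArray ρ) (a b c d : ι) : ρ a b c d = -ρ a b d c := by
  rw [hρ.pair_comm, hρ.antisymm_left, hρ.pair_comm d]

lemma apply_self_left (hρ : IsCurvatureArray ρ) (a c d : ι) : ρ a a c d = 0 := by
  linarith [hρ.antisymm_left a a c d]

lemma apply_self_right (hρ : IsCurvatureArray ρ) (a b c : ι) : ρ a b c c = 0 := by
  linarith [hρ.antisymm_right a b c c]

lemma apply_comm_outer (hρ : IsCurvatureArray ρ) (a c d b : ι) : ρ a c d b = ρ b d c a := by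
  rw [hρ.pair_comm, hρ.antisymm_left, hρ.antisymm_right, neg_neg]

lemma bianchi_right (hρ : IsCurvatureArray ρ) (a b c d : ι) :
    ρ a b c d + ρ a c d b + ρ a d b c = 0 := by
  have := hρ.bianchi c d b a
  rw [hρ.pair_comm a b, hρ.pair_comm a c, hρ.pair_comm a d]
  linarith [hρ.antisymm_right c d a b, hρ.antisymm_right d b a c, hρ.antisymm_right b c a d,
    hρ.antisymm_left c d b a]

lemma eq_of_components [DecidableEq ι] (hρ : IsCurvatureArray ρ) (ε : ι → ℝ) (κ : ℝ)
    (hsec : ∀ a b, a ≠ b → ρ a b b a = κ * ε a * ε b)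
    (hjac : ∀ a b c, a ≠ b → a ≠ c → b ≠ c → ρ a b b c = 0)
    (hdist : ∀ a b c d, a ≠ b → a ≠ c → a ≠ d → b ≠ c → b ≠ d → c ≠ d → ρ a b c d = 0)
    (a b c d : ι) :
    ρ a b c d = κ * (Matrix.diagonal ε a d * Matrix.diagonal ε b c
      - Matrix.diagonal ε a c * Matrix.diagonal ε b d) := by
  rcases eq_or_ne a b with rfl | hab
  · rw [hρ.apply_self_left]; ring
  rcases eq_or_ne c d with rfl | hcd
  · rw [hρ.apply_self_right]; ring
  rcases eq_or_ne a c with rfl | hac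
  · rcases eq_or_ne b d with rfl | hbd
    · rw [hρ.antisymm_right, hsec a b hab]; simp [hab, hab.symm]; ring
    · rw [hρ.antisymm_left, hjac b a d hab.symm hbd hcd]; simp [hcd, hbd]
  rcases eq_or_ne b c with rfl | hbc
  · rcases eq_or_ne a d with rfl | had
    · rw [hsec a b hab]; simp [hab]; ring
    · rw [hjac a b d hab had hcd]; simp [had, hab]
  rcases eq_or_ne a d with rfl | had
  · rw [hρ.antisymm_right, hρ.antisymm_left, hjac b a c hab.symm hbc hac]; simp [hac, hbc]
  rcases eq_or_ne b d with rfl | hbd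
  · rw [hρ.antisymm_right, hjac a b c hab hac hbc]; simp [hac, hbc, hab]
  rw [hdist a b c d hab hac had hbc hbd hcd]; simp [had, hac]

variable [Fintype ι]

lemma jacobiMatrix_comm (hρ : IsCurvatureArray ρ) (v : ι → ℝ) (a b : ι) :
    jacobiMatrix ρ v a b = jacobiMatrix ρ v b a := by
  rw [jacobiMatrix, jacobiMatrix, sum_comm]
  exact sum_congr rfl fun d _ => sum_congr rfl fun c _ => by rw [hρ.apply_comm_outer]; ring

lemma sum_jacobiMatrix_mul (hρ : IsCurvatureArray ρ) (v : ι → ℝ) (a : ι) :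
    ∑ b, jacobiMatrix ρ v a b * v b = 0 :=
  calc ∑ b, jacobiMatrix ρ v a b * v b
      = ∑ c, v c * ∑ d, ∑ b, v d * v b * ρ a c d b := by
        simp only [jacobiMatrix, sum_mul, mul_sum]
        rw [sum_comm]
        refine sum_congr rfl fun c _ => ?_
        rw [sum_comm]
        exact sum_congr rfl fun d _ => sum_congr rfl fun b _ => by ring
    _ = 0 := by
        simp [sum_sum_mul_mul_eq_zero_of_antisymm v (hρ.antisymm_right a _)]

end General

variable {n : ℕ} {ρ : Fin (n + 1) → Fin (n + 1) → Fin (n + 1) → Fin (n + 1) → ℝ}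

lemma wedgeCoord_jacobiMatrix_cons_eq_zero (hρ : IsCurvatureArray ρ)
    (hnull : IsNullJacobiTraceFree ρ) {u : Fin n → ℝ} (hu : ∑ k, u k ^ 2 = 1)
    (p p' : Fin n × Fin n) :
    wedgeCoord u (fun a => wedgeCoord u (jacobiMatrix ρ (Fin.cons 1 u) a) p) p' = 0 := by
  have hv : ∑ a, minkowskiSign a * (Fin.cons 1 u : Fin (n + 1) → ℝ) a ^ 2 = 0 := by
    rw [sum_minkowskiSign_mul]; simp [hu]
  refine wedgeCoord_wedgeCoord_eq_zero hu (hρ.jacobiMatrix_comm _) (fun a => ?_) (hnull _ hv) p p'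
  simpa [Fin.sum_univ_succ, mul_comm] using hρ.sum_jacobiMatrix_mul (Fin.cons 1 u) a

lemma jacobiMatrix_cons_succ_succ_eq_zero (hρ : IsCurvatureArray ρ)
    (hnull : IsNullJacobiTraceFree ρ) {u : Fin n → ℝ} (hu : ∑ k, u k ^ 2 = 1) {b c : Fin n}
    (hb : u b = 0) (hc : u c = 0) : jacobiMatrix ρ (Fin.cons 1 u) b.succ c.succ = 0 :=
  apply_succ_succ_eq_zero_of_wedgeCoord hu (hρ.wedgeCoord_jacobiMatrix_cons_eq_zero hnull hu) hb hc

lemma axis_relations (hρ : IsCurvatureArray ρ) (hnull : IsNullJacobiTraceFree ρ)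
    {i a b : Fin n} (ha : a ≠ i) (hb : b ≠ i) :
    ρ a.succ 0 0 b.succ + ρ a.succ i.succ i.succ b.succ = 0 ∧
      ρ a.succ 0 i.succ b.succ + ρ a.succ i.succ 0 b.succ = 0 := by
  have h (s : ℝ) (hs : s ^ 2 = 1) :
      ρ a.succ 0 0 b.succ + s * (ρ a.succ 0 i.succ b.succ + ρ a.succ i.succ 0 b.succ)
        + ρ a.succ i.succ i.succ b.succ = 0 := by
    have hu : ∑ k, (Pi.single i s + Pi.single i 0 : Fin n → ℝ) k ^ 2 = 1 := by
      simpa [Pi.single_apply] using hs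
    have := hρ.jacobiMatrix_cons_succ_succ_eq_zero hnull hu (b := a) (c := b)
      (by simp [ha]) (by simp [hb])
    rw [jacobiMatrix_cons_single_add_single, hs] at this
    linear_combination this
  have h₁ := h 1 (by norm_num)
  have h₂ := h (-1) (by norm_num)
  constructor <;> linarith

lemma plane_relation (hρ : IsCurvatureArray ρ) (hnull : IsNullJacobiTraceFree ρ)
    {i j a b : Fin n} (hij : i ≠ j) (hai : a ≠ i) (haj : a ≠ j) (hbi : b ≠ i) (hbj : b ≠ j) :
    ρ a.succ i.succ j.succ b.succ + ρ a.succ j.succ i.succ b.succ = 0 := by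
  have hu : ∑ k, (Pi.single i (3 / 5) + Pi.single j (4 / 5) : Fin n → ℝ) k ^ 2 = 1 := by
    simp [Pi.single_apply, add_sq, sum_add_distrib, ite_pow, hij.symm]; norm_num
  have h := hρ.jacobiMatrix_cons_succ_succ_eq_zero hnull hu (b := a) (c := b)
    (by simp [hai, haj]) (by simp [hbi, hbj])
  rw [jacobiMatrix_cons_single_add_single] at h
  obtain ⟨hi₁, hi₂⟩ := hρ.axis_relations hnull hai hbi
  obtain ⟨hj₁, hj₂⟩ := hρ.axis_relations hnull haj hbj
  linarith

lemma apply_succ_zero_zero_succ (hρ : IsCurvatureArray ρ) (hnull : IsNullJacobiTraceFree ρ)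
    {i j : Fin n} (hij : i ≠ j) : ρ i.succ 0 0 j.succ = 0 := by
  have h (s t : ℝ) (hst : s ^ 2 + t ^ 2 = 1) := by
    have hu : ∑ k, (Pi.single i s + Pi.single j t : Fin n → ℝ) k ^ 2 = 1 := by
      simp [Pi.single_apply, add_sq, sum_add_distrib, ite_pow, hij.symm, hst]
    have := hρ.wedgeCoord_jacobiMatrix_cons_eq_zero hnull hu (i, j) (i, j)
    simp only [wedgeCoord, jacobiMatrix_cons_single_add_single] at this
    exact this
  -- Adding the relations for `±u` cancels the odd terms; by the axis relations what remains is
  -- a nonzero multiple of `ρ i.succ 0 0 j.succ`.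
  have h₁ := h (3 / 5) (4 / 5) (by norm_num)
  have h₂ := h (-3 / 5) (-4 / 5) (by norm_num)
  simp [hij, hij.symm, hρ.apply_self_left, hρ.apply_self_right] at h₁ h₂
  obtain ⟨hi, -⟩ := hρ.axis_relations hnull hij hij
  obtain ⟨hj, -⟩ := hρ.axis_relations hnull hij.symm hij.symm
  linarith [hρ.apply_comm_outer j.succ 0 0 i.succ, hρ.pair_comm j.succ i.succ i.succ j.succ,
    hρ.antisymm_right j.succ i.succ j.succ i.succ, hρ.antisymm_right i.succ j.succ i.succ j.succ]

lemma exists_apply_succ_zero_zero_succ_eq (hρ : IsCurvatureArray ρ)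
    (hnull : IsNullJacobiTraceFree ρ) : ∃ κ, ∀ a : Fin n, ρ a.succ 0 0 a.succ = -κ := by
  rcases isEmpty_or_nonempty (Fin n) with h | ⟨⟨i⟩⟩
  · exact ⟨0, isEmptyElim⟩
  refine ⟨-ρ i.succ 0 0 i.succ, fun a => ?_⟩
  rcases eq_or_ne a i with rfl | hai
  · ring
  have h₁ := (hρ.axis_relations hnull hai hai).1
  have h₂ := (hρ.axis_relations hnull hai.symm hai.symm).1
  linarith [hρ.pair_comm a.succ i.succ i.succ a.succ]

lemma apply_zero_succ_succ_succ_diag (hρ : IsCurvatureArray ρ) (hnull : IsNullJacobiTraceFree ρ)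
    {b c : Fin n} (hbc : b ≠ c) : ρ 0 b.succ b.succ c.succ = 0 := by
  have := (hρ.axis_relations hnull hbc hbc).2
  linarith [hρ.pair_comm 0 b.succ b.succ c.succ, hρ.apply_comm_outer b.succ 0 c.succ b.succ]

lemma apply_zero_succ_succ_succ (hρ : IsCurvatureArray ρ) (hnull : IsNullJacobiTraceFree ρ)
    {x y z : Fin n} (hxy : x ≠ y) (hxz : x ≠ z) (hyz : y ≠ z) :
    ρ 0 x.succ y.succ z.succ = 0 := by
  have cycle {x y z : Fin n} (hxy : x ≠ y) (hxz : x ≠ z) (hyz : y ≠ z) :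
      ρ 0 z.succ x.succ y.succ = ρ 0 x.succ y.succ z.succ := by
    have := (hρ.axis_relations hnull hxy hyz.symm).2
    linarith [hρ.antisymm_left x.succ 0 y.succ z.succ, hρ.pair_comm x.succ y.succ 0 z.succ]
  linarith [hρ.bianchi_right 0 x.succ y.succ z.succ, cycle hxy hxz hyz,
    cycle hyz hxy.symm hxz.symm]

lemma apply_succ_succ_succ_succ (hρ : IsCurvatureArray ρ) (hnull : IsNullJacobiTraceFree ρ)
    {a b c d : Fin n} (hab : a ≠ b) (hac : a ≠ c) (had : a ≠ d) (hbc : b ≠ c) (hbd : b ≠ d)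
    (hcd : c ≠ d) : ρ a.succ b.succ c.succ d.succ = 0 := by
  have h₁ := hρ.plane_relation hnull hbc hab hac hbd.symm hcd.symm
  have h₂ := hρ.plane_relation hnull hac hab.symm hbc had.symm hcd.symm
  linarith [hρ.bianchi a.succ b.succ c.succ d.succ, hρ.antisymm_left c.succ a.succ b.succ d.succ,
    hρ.antisymm_left b.succ a.succ c.succ d.succ]

lemma sectional_eq_of_null (hρ : IsCurvatureArray ρ) (hnull : IsNullJacobiTraceFree ρ) {κ : ℝ}
    (hκ : ∀ a : Fin n, ρ a.succ 0 0 a.succ = -κ) {a b : Fin (n + 1)} (hab : a ≠ b) :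
    ρ a b b a = κ * minkowskiSign a * minkowskiSign b := by
  rcases a.eq_zero_or_eq_succ with rfl | ⟨a, rfl⟩ <;>
    rcases b.eq_zero_or_eq_succ with rfl | ⟨b, rfl⟩
  · exact absurd rfl hab
  · rw [hρ.pair_comm, hκ]; simp
  · rw [hκ]; simp
  · have hab' := ne_of_apply_ne Fin.succ hab
    have := (hρ.axis_relations hnull hab' hab').1
    simp only [minkowskiSign_succ, mul_one]
    linarith [hκ a]

lemma apply_mid_self_eq_zero_of_null (hρ : IsCurvatureArray ρ) (hnull : IsNullJacobiTraceFree ρ)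
    {a b c : Fin (n + 1)} (hab : a ≠ b) (hac : a ≠ c) (hbc : b ≠ c) : ρ a b b c = 0 := by
  rcases b.eq_zero_or_eq_succ with rfl | ⟨b, rfl⟩
  · obtain ⟨a, rfl⟩ := Fin.exists_succ_eq.2 hab
    obtain ⟨c, rfl⟩ := Fin.exists_succ_eq.2 hbc.symm
    exact hρ.apply_succ_zero_zero_succ hnull (ne_of_apply_ne Fin.succ hac)
  rcases a.eq_zero_or_eq_succ with rfl | ⟨a, rfl⟩
  · obtain ⟨c, rfl⟩ := Fin.exists_succ_eq.2 hac.symm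
    exact hρ.apply_zero_succ_succ_succ_diag hnull (ne_of_apply_ne Fin.succ hbc)
  rcases c.eq_zero_or_eq_succ with rfl | ⟨c, rfl⟩
  · rw [hρ.apply_comm_outer]
    exact hρ.apply_zero_succ_succ_succ_diag hnull (ne_of_apply_ne Fin.succ hab).symm
  have := (hρ.axis_relations hnull (ne_of_apply_ne Fin.succ hab)
    (ne_of_apply_ne Fin.succ hbc).symm).1
  linarith [hρ.apply_succ_zero_zero_succ hnull (ne_of_apply_ne Fin.succ hac)]

lemma apply_zero_eq_zero_of_null (hρ : IsCurvatureArray ρ) (hnull : IsNullJacobiTraceFree ρ)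
    {b c d : Fin (n + 1)} (hb : b ≠ 0) (hc : c ≠ 0) (hd : d ≠ 0) (hbc : b ≠ c) (hbd : b ≠ d)
    (hcd : c ≠ d) : ρ 0 b c d = 0 := by
  obtain ⟨b, rfl⟩ := Fin.exists_succ_eq.2 hb
  obtain ⟨c, rfl⟩ := Fin.exists_succ_eq.2 hc
  obtain ⟨d, rfl⟩ := Fin.exists_succ_eq.2 hd
  exact hρ.apply_zero_succ_succ_succ hnull (ne_of_apply_ne Fin.succ hbc)
    (ne_of_apply_ne Fin.succ hbd) (ne_of_apply_ne Fin.succ hcd)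

lemma apply_eq_zero_of_null (hρ : IsCurvatureArray ρ) (hnull : IsNullJacobiTraceFree ρ)
    {a b c d : Fin (n + 1)} (hab : a ≠ b) (hac : a ≠ c) (had : a ≠ d) (hbc : b ≠ c)
    (hbd : b ≠ d) (hcd : c ≠ d) : ρ a b c d = 0 := by
  rcases eq_or_ne a 0 with rfl | ha
  · exact hρ.apply_zero_eq_zero_of_null hnull hab.symm hac.symm had.symm hbc hbd hcd
  rcases eq_or_ne b 0 with rfl | hb
  · rw [hρ.antisymm_left, hρ.apply_zero_eq_zero_of_null hnull ha hbc.symm hbd.symm hac had hcd,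
      neg_zero]
  rcases eq_or_ne c 0 with rfl | hc
  · rw [hρ.pair_comm, hρ.apply_zero_eq_zero_of_null hnull hcd.symm ha hb had.symm hbd.symm hab]
  rcases eq_or_ne d 0 with rfl | hd
  · rw [hρ.antisymm_right, hρ.pair_comm,
      hρ.apply_zero_eq_zero_of_null hnull hc ha hb hac.symm hbc.symm hab, neg_zero]
  obtain ⟨a, rfl⟩ := Fin.exists_succ_eq.2 ha
  obtain ⟨b, rfl⟩ := Fin.exists_succ_eq.2 hb
  obtain ⟨c, rfl⟩ := Fin.exists_succ_eq.2 hc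
  obtain ⟨d, rfl⟩ := Fin.exists_succ_eq.2 hd
  exact hρ.apply_succ_succ_succ_succ hnull (ne_of_apply_ne Fin.succ hab)
    (ne_of_apply_ne Fin.succ hac) (ne_of_apply_ne Fin.succ had) (ne_of_apply_ne Fin.succ hbc)
    (ne_of_apply_ne Fin.succ hbd) (ne_of_apply_ne Fin.succ hcd)

theorem exists_eq_of_isNullJacobiTraceFree (hρ : IsCurvatureArray ρ)
    (hnull : IsNullJacobiTraceFree ρ) :
    ∃ κ : ℝ, ∀ a b c d, ρ a b c d = κ * (Matrix.diagonal minkowskiSign a d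
      * Matrix.diagonal minkowskiSign b c - Matrix.diagonal minkowskiSign a c
      * Matrix.diagonal minkowskiSign b d) := by
  obtain ⟨κ, hκ⟩ := hρ.exists_apply_succ_zero_zero_succ_eq hnull
  exact ⟨κ, hρ.eq_of_components _ κ (fun _ _ => hρ.sectional_eq_of_null hnull hκ)
    (fun _ _ _ => hρ.apply_mid_self_eq_zero_of_null hnull)
    (fun _ _ _ _ => hρ.apply_eq_zero_of_null hnull)⟩

end IsCurvatureArray

section BilinForm

variable {K V : Type*} [CommRing K] [AddCommGroup V] [Module K V]

def constCurvatureTensor (B : LinearMap.BilinForm K V) : V →ₗ[K] V →ₗ[K] V →ₗ[K] V →ₗ[K] K :=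
  LinearMap.mk₂ K
    (fun x y => LinearMap.mk₂ K (fun z w => B x w * B y z - B x z * B y w)
      (by intros; simp only [map_add]; ring)
      (by intros; simp only [map_smul, smul_eq_mul]; ring)
      (by intros; simp only [map_add]; ring)
      (by intros; simp only [map_smul, smul_eq_mul]; ring))
    (by intros; ext; simp only [map_add, LinearMap.add_apply, LinearMap.mk₂_apply]; ring)
    (by intros; ext; simp only [map_smul, LinearMap.smul_apply, LinearMap.mk₂_apply]; ring)
    (by intros; ext; simp only [map_add, LinearMap.add_apply, LinearMap.mk₂_apply]; ring)
    (by intros; ext; simp only [map_smul, LinearMap.smul_apply, LinearMap.mk₂_apply]; ring)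

@[simp] lemma constCurvatureTensor_apply (B : LinearMap.BilinForm K V) (x y z w : V) :
    constCurvatureTensor B x y z w = B x w * B y z - B x z * B y w := rfl

variable {ι : Type*} [Fintype ι] [DecidableEq ι] {B : LinearMap.BilinForm K V}
  {e : Module.Basis ι K V} {s : ι → K}

lemma Module.Basis.repr_eq_mul_of_orthonormal (hs : ∀ a, s a * s a = 1)
    (hBe : ∀ a b, B (e a) (e b) = if a = b then s a else 0) (v : V) (a : ι) :
    e.repr v a = s a * B v (e a) := by
  have : B v (e a) = e.repr v a * s a := by
    conv_lhs => rw [← e.sum_repr v]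
    simp only [map_sum, map_smul, LinearMap.sum_apply, LinearMap.smul_apply, smul_eq_mul, hBe,
      mul_ite, mul_zero, sum_ite_eq', mem_univ, if_true]
  rw [this, mul_left_comm, hs, mul_one]

lemma trace_sq_eq_sum_of_orthonormal (hs : ∀ a, s a * s a = 1)
    (hBe : ∀ a b, B (e a) (e b) = if a = b then s a else 0) (T : Module.End K V) :
    LinearMap.trace K V (T ^ 2)
      = ∑ a, ∑ b, s a * s b * B (T (e a)) (e b) * B (T (e b)) (e a) := by
  rw [LinearMap.trace_eq_matrix_trace K e, Matrix.trace]
  refine sum_congr rfl fun a _ => ?_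
  have hT : T (e a) = ∑ b, (s b * B (T (e a)) (e b)) • e b := by
    conv_lhs => rw [← e.sum_repr (T (e a))]
    simp only [e.repr_eq_mul_of_orthonormal hs hBe]
  rw [Matrix.diag_apply, LinearMap.toMatrix_apply, pow_two, Module.End.mul_apply,
    e.repr_eq_mul_of_orthonormal hs hBe]
  conv_lhs => rw [hT]
  simp only [map_sum, map_smul, LinearMap.sum_apply, LinearMap.smul_apply, smul_eq_mul, mul_sum]
  exact sum_congr rfl fun b _ => by ring

end BilinForm

section RealComponents

variable {V : Type*} [AddCommGroup V] [Module ℂ V] {R : V →ₗ[ℂ] V →ₗ[ℂ] V →ₗ[ℂ] V →ₗ[ℂ] ℂ}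

lemma isCurvatureArray_of_components {ι : Type*} {e : ι → V} {ρ : ι → ι → ι → ι → ℝ}
    (hR1 : ∀ x y z w, R x y z w = R z w x y) (hR2 : ∀ x y z w, R x y z w = -R y x z w)
    (hR3 : ∀ x y z w, R x y z w + R y z x w + R z x y w = 0)
    (hRρ : ∀ a b c d, R (e a) (e b) (e c) (e d) = ρ a b c d) : IsCurvatureArray ρ where
  pair_comm a b c d := by
    have h := hR1 (e a) (e b) (e c) (e d); rw [hRρ, hRρ] at h; exact_mod_cast h
  antisymm_left a b c d := by
    have h := hR2 (e a) (e b) (e c) (e d); rw [hRρ, hRρ] at h; exact_mod_cast h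
  bianchi a b c d := by
    have h := hR3 (e a) (e b) (e c) (e d); rw [hRρ, hRρ, hRρ] at h; exact_mod_cast h

lemma isNullJacobiTraceFree_of_components {n : ℕ} {B : LinearMap.BilinForm ℂ V}
    {e : Module.Basis (Fin (n + 1)) ℂ V}
    (hBe : ∀ a b, B (e a) (e b) = if a = b then (minkowskiSign a : ℂ) else 0)
    {ρ : Fin (n + 1) → Fin (n + 1) → Fin (n + 1) → Fin (n + 1) → ℝ} (hρ : IsCurvatureArray ρ)
    (hRρ : ∀ a b c d, R (e a) (e b) (e c) (e d) = ρ a b c d)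
    {J : V → Module.End ℂ V} (hJ : ∀ x y w, B (J x y) w = R y x x w)
    (hnull : ∀ x : V, B x x = 0 → LinearMap.trace ℂ V ((J x) ^ 2) = 0) :
    IsNullJacobiTraceFree ρ := by
  intro v hv
  set z := ∑ c, (v c : ℂ) • e c
  have hz : B z z = 0 := by
    have : B z z = ((∑ c, minkowskiSign c * v c ^ 2 : ℝ) : ℂ) := by
      simp only [z, map_sum, map_smul, LinearMap.sum_apply, LinearMap.smul_apply, smul_eq_mul,
        hBe, mul_ite, mul_zero, sum_ite_eq', mem_univ, if_true]
      push_cast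
      exact sum_congr rfl fun c _ => by ring
    rw [this, hv, Complex.ofReal_zero]
  have hJz (a b : Fin (n + 1)) : B (J z (e a)) (e b) = jacobiMatrix ρ v a b := by
    simp only [hJ, z, jacobiMatrix, map_sum, map_smul, LinearMap.sum_apply, LinearMap.smul_apply,
      smul_eq_mul, hRρ, mul_sum]
    push_cast
    rw [sum_comm]
    exact sum_congr rfl fun c _ => sum_congr rfl fun d _ => by ring
  have hsign (a : Fin (n + 1)) : (minkowskiSign a : ℂ) * minkowskiSign a = 1 := by
    unfold minkowskiSign; split_ifs <;> norm_num
  have hterm (a b : Fin (n + 1)) :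
      (minkowskiSign a : ℂ) * minkowskiSign b * B (J z (e a)) (e b) * B (J z (e b)) (e a)
        = (minkowskiSign a * minkowskiSign b * jacobiMatrix ρ v a b ^ 2 : ℝ) := by
    rw [hJz, hJz, hρ.jacobiMatrix_comm v b a]; push_cast; ring
  have h := hnull z hz
  simp only [trace_sq_eq_sum_of_orthonormal hsign hBe, hterm] at h
  exact_mod_cast h

end RealComponents

theorem lorentz_null_trace_sq_implies_constant_curvature_general
    (V : Type*) [AddCommGroup V] [Module ℂ V]
    (q : ℕ)
    (B : LinearMap.BilinForm ℂ V)
    (e : Module.Basis (Fin (q + 1)) ℂ V)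
    (hBe : ∀ i j, B (e i) (e j) =
      if i = j then (if i = 0 then (-1 : ℂ) else 1) else 0)
    (R : V →ₗ[ℂ] V →ₗ[ℂ] V →ₗ[ℂ] V →ₗ[ℂ] ℂ)
    (hR1 : ∀ x y z w, R x y z w = R z w x y)
    (hR2 : ∀ x y z w, R x y z w = - R y x z w)
    (hR3 : ∀ x y z w, R x y z w + R y z x w + R z x y w = 0)
    (hRreal : ∀ i j k l, ∃ r : ℝ, R (e i) (e j) (e k) (e l) = (r : ℂ))
    (J : V → Module.End ℂ V)
    (hJ : ∀ x y w, B (J x y) w = R y x x w)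
    (hnull : ∀ x : V, B x x = 0 → LinearMap.trace ℂ V ((J x) ^ 2) = 0) :
    ∃ c : ℝ, ∀ x y z w, R x y z w = (c : ℂ) * (B x w * B y z - B x z * B y w) := by
  choose ρ hRρ using hRreal
  have hBe' (a b : Fin (q + 1)) : B (e a) (e b) = if a = b then (minkowskiSign a : ℂ) else 0 := by
    rw [hBe]; unfold minkowskiSign; split_ifs <;> norm_num
  have hρ := isCurvatureArray_of_components hR1 hR2 hR3 hRρ
  obtain ⟨κ, hκ⟩ := hρ.exists_eq_of_isNullJacobiTraceFree
    (isNullJacobiTraceFree_of_components hBe' hρ hRρ hJ hnull)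
  have hR : R = (κ : ℂ) • constCurvatureTensor B :=
    e.ext fun a => e.ext fun b => e.ext fun c => e.ext fun d => by
      simp only [hRρ, hκ, LinearMap.smul_apply, constCurvatureTensor_apply, hBe', smul_eq_mul,
        Matrix.diagonal_apply]
      push_cast [apply_ite ((↑) : ℝ → ℂ)]
      rfl
  exact ⟨κ, fun x y z w => by rw [hR]; rfl⟩

/-- If `trace{J_R(x)²} = 0` for every complex null vector `x`, where `R` is (the
complexification of) a Lorentzian algebraic curvature tensor, then `R` has constant
sectional curvature.  The complexification is modelled as a complex vector space `V`
with a complex-bilinear symmetric form admitting a basis `e` with `(e₀,e₀) = -1`,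
`(eᵢ,eᵢ) = 1`, the reality of `R` being expressed by its values on the basis being
real. -/
theorem lorentz_null_trace_sq_implies_constant_curvature
    (V : Type*) [AddCommGroup V] [Module ℂ V] [FiniteDimensional ℂ V]
    (q : ℕ) (hq : 2 ≤ q)
    (B : LinearMap.BilinForm ℂ V) (hBsymm : ∀ x y, B x y = B y x)
    (e : Module.Basis (Fin (q + 1)) ℂ V)
    (hBe : ∀ i j, B (e i) (e j) =
      if i = j then (if i = 0 then (-1 : ℂ) else 1) else 0)
    (R : V →ₗ[ℂ] V →ₗ[ℂ] V →ₗ[ℂ] V →ₗ[ℂ] ℂ)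
    (hR1 : ∀ x y z w, R x y z w = R z w x y)
    (hR2 : ∀ x y z w, R x y z w = - R y x z w)
    (hR3 : ∀ x y z w, R x y z w + R y z x w + R z x y w = 0)
    (hRreal : ∀ i j k l, ∃ r : ℝ, R (e i) (e j) (e k) (e l) = (r : ℂ))
    (J : V → Module.End ℂ V)
    (hJ : ∀ x y w, B (J x y) w = R y x x w)
    (hnull : ∀ x : V, B x x = 0 → LinearMap.trace ℂ V ((J x) ^ 2) = 0) :
    ∃ c : ℝ, ∀ x y z w, R x y z w = (c : ℂ) * (B x w * B y z - B x z * B y w) :=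
  lorentz_null_trace_sq_implies_constant_curvature_general V q B e hBe R hR1 hR2 hR3 hRreal J hJ
    hnull
end

section
/- Let ∇R be a covariant derivative algebraic curvature tensor on a vector space V of arbitrary signature. If ∇R(x,y,y,w;y) = 0 for all x,y,w ∈ V (i.e. the Szabó operator vanishes identically), then ∇R = 0. -/
set_option maxHeartbeats 2000000 in
/-- If the Szabó operator of a covariant derivative algebraic curvature tensor
vanishes identically, i.e. `∇R(x,y,y,w;y) = 0` for all `x,y,w`, then `∇R = 0`. -/
theorem szabo_zero_implies_nablaR_zero
    (V : Type*) [AddCommGroup V] [Module ℝ V]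
    (nR : V →ₗ[ℝ] V →ₗ[ℝ] V →ₗ[ℝ] V →ₗ[ℝ] V →ₗ[ℝ] ℝ)
    (hnR1 : ∀ a b c d e, nR a b c d e = - nR b a c d e)
    (hnR2 : ∀ a b c d e, nR a b c d e = nR c d a b e)
    (hnR3 : ∀ a b c d e, nR a b c d e + nR a c d b e + nR a d b c e = 0)
    (hnR4 : ∀ a b c d e, nR a b c d e + nR a b d e c + nR a b e c d = 0)
    (hS : ∀ x y w, nR x y y w y = 0) :
    ∀ a b c d e, nR a b c d e = 0 := by
  have pol : ∀ x w u v z,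
      nR x u v w z + nR x u z w v + nR x v u w z + nR x v z w u
        + nR x z u w v + nR x z v w u = 0 := by
    intro x w u v z
    have h1 := hS x (u + v + z) w
    have h2 := hS x (u + v) w
    have h3 := hS x (u + z) w
    have h4 := hS x (v + z) w
    have h5 := hS x u w
    have h6 := hS x v w
    have h7 := hS x z w
    simp only [map_add, LinearMap.add_apply] at h1 h2 h3 h4
    linarith
  intro a b c d e
  linear_combination
    (1/4 : ℝ) * (hnR4 b d a c e) +
    (-1/4 : ℝ) * (hnR2 a e b d c) +
    (-1/4 : ℝ) * (hnR1 b d a e c) +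
    (1/4 : ℝ) * (hnR2 d b a e c) +
    (1/4 : ℝ) * (hnR1 a e d b c) +
    (-1/4 : ℝ) * (hnR2 e a d b c) +
    (-1/4 : ℝ) * (hnR1 d b e a c) +
    (-1/4 : ℝ) * (hnR4 b c a d e) +
    (-1/3 : ℝ) * (hnR2 a d b c e) +
    (1/4 : ℝ) * (hnR2 a e b c d) +
    (1/4 : ℝ) * (hnR1 b c a e d) +
    (-1/4 : ℝ) * (hnR2 c b a e d) +
    (-1/4 : ℝ) * (hnR1 a e c b d) +
    (1/4 : ℝ) * (hnR2 e a c b d) +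
    (1/4 : ℝ) * (hnR1 c b e a d) +
    (2/3 : ℝ) * (hnR3 a b c d e) +
    (-2/3 : ℝ) * (hnR1 b d a c e) +
    (2/3 : ℝ) * (hnR2 d b a c e) +
    (-1/4 : ℝ) * (hnR4 a d b c e) +
    (-1/6 : ℝ) * (hnR3 a c d e b) +
    (1/4 : ℝ) * (hnR2 a d c e b) +
    (1/4 : ℝ) * (hnR1 c e a d b) +
    (-1/4 : ℝ) * (hnR2 e c a d b) +
    (1/4 : ℝ) * (hnR4 a c b d e) +
    (1/6 : ℝ) * (hnR3 a b d e c) +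
    (-1/6 : ℝ) * (hnR3 a b c e d) +
    (1/6 : ℝ) * (hnR2 a b c e d) +
    (1/6 : ℝ) * (hnR1 c e a b d) +
    (-1/6 : ℝ) * (hnR2 e c a b d) +
    (-1/3 : ℝ) * (hnR2 a c b d e) +
    (1/12 : ℝ) * (pol a d b c e) +
    (-1/6 : ℝ) * (hnR2 a b d e c) +
    (-1/6 : ℝ) * (hnR1 d e a b c) +
    (1/6 : ℝ) * (hnR2 e d a b c) +
    (-1/12 : ℝ) * (hnR2 a c d e b) +
    (-1/12 : ℝ) * (hnR1 d e a c b) +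
    (1/12 : ℝ) * (hnR2 e d a c b) +
    (-1/12 : ℝ) * (pol a c b d e) +
    (1/6 : ℝ) * (hnR2 a b c d e) +
    (1/6 : ℝ) * (hnR1 c d a b e) +
    (-1/6 : ℝ) * (hnR2 d c a b e) +
    (1/12 : ℝ) * (hnR2 a e c d b) +
    (1/12 : ℝ) * (hnR1 c d a e b) +
    (-1/12 : ℝ) * (hnR2 d c a e b) +
    (1/6 : ℝ) * (hnR3 b c d e a) +
    (-1/4 : ℝ) * (hnR2 b d c e a) +
    (-1/4 : ℝ) * (hnR1 c e b d a) +
    (1/4 : ℝ) * (hnR2 e c b d a) +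
    (-1/12 : ℝ) * (pol b d a c e) +
    (1/12 : ℝ) * (hnR1 a b c d e) +
    (1/12 : ℝ) * (hnR1 a b e d c) +
    (1/12 : ℝ) * (hnR2 b c d e a) +
    (1/12 : ℝ) * (hnR1 d e b c a) +
    (-1/12 : ℝ) * (hnR2 e d b c a) +
    (1/12 : ℝ) * (hnR1 b e a d c) +
    (-1/12 : ℝ) * (hnR2 e b a d c) +
    (1/12 : ℝ) * (pol b c a d e) +
    (-1/12 : ℝ) * (hnR1 a b d c e) +
    (-1/12 : ℝ) * (hnR1 a b e c d) +
    (-1/12 : ℝ) * (hnR2 b e c d a) +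
    (-1/12 : ℝ) * (hnR1 c d b e a) +
    (1/12 : ℝ) * (hnR2 d c b e a) +
    (-1/12 : ℝ) * (hnR1 b e a c d) +
    (1/12 : ℝ) * (hnR2 e b a c d)
end

section
/- Let ∇R be a 5-tensor with the curvature symmetries satisfying ∇R(x,y,y,w;y)=0 for all x,y,w. Then 0 = 2∇R(x,y,w,x;y) - ∇R(x,y,y,x;w) for all w,x,y (polarization of the Szabó condition combined with the curvature symmetries). -/
/-!
The second Bianchi identity, applied to `∇R(x,y,y,x;w)`, writes it as
`-∇R(x,y,x,w;y) - ∇R(x,y,w,y;x)`. Linearising the Szabó condition `∇R(x,y,y,w;y) = 0` in `y`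
along `x` identifies these two terms, and each equals `-∇R(x,y,w,x;y)` by antisymmetry in the
second pair of slots.
-/

section CurvatureDerivative

variable {𝕜 V : Type*} [Field 𝕜] [AddCommGroup V] [Module 𝕜 V]
  (R : V →ₗ[𝕜] V →ₗ[𝕜] V →ₗ[𝕜] V →ₗ[𝕜] V →ₗ[𝕜] 𝕜)

theorem apply_self_left_eq_zero [CharZero 𝕜] (hanti : ∀ a b c d e, R a b c d e = -R b a c d e)
    (a c d e : V) : R a a c d e = 0 :=
  CharZero.eq_neg_self_iff.mp (hanti a a c d e)

theorem apply_swap_right (hanti : ∀ a b c d e, R a b c d e = -R b a c d e)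
    (hpair : ∀ a b c d e, R a b c d e = R c d a b e) (a b c d e : V) :
    R a b c d e = -R a b d c e := by
  rw [hpair a b c d e, hanti c d a b e, hpair a b d c e]

/-- The coefficient of `t` in `R a (b + t d) (b + t d) c (b + t d) = 0`. -/
theorem szabo_polarized [CharZero 𝕜] (hS : ∀ x y w, R x y y w y = 0) (a b c d : V) :
    R a d b c b + R a b d c b + R a b b c d = 0 := by
  have hplus := hS a (b + d) c
  -- `(-1 : 𝕜) • d` rather than `-d`: `Neg` on the nested `LinearMap` types is not found by instance search.
  have hminus := hS a (b + (-1 : 𝕜) • d) c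
  simp only [map_add, map_smul, LinearMap.add_apply, LinearMap.smul_apply, smul_eq_mul] at hplus hminus
  linear_combination (hplus - hminus) / 2 - hS a d c

end CurvatureDerivative

theorem szabo_polarization_identity_general
    (V : Type*) [AddCommGroup V] [Module ℝ V]
    (nR : V →ₗ[ℝ] V →ₗ[ℝ] V →ₗ[ℝ] V →ₗ[ℝ] V →ₗ[ℝ] ℝ)
    (hnR1 : ∀ a b c d e, nR a b c d e = - nR b a c d e)
    (hnR2 : ∀ a b c d e, nR a b c d e = nR c d a b e)
    (hnR4 : ∀ a b c d e, nR a b c d e + nR a b d e c + nR a b e c d = 0)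
    (hS : ∀ x y w, nR x y y w y = 0) :
    ∀ w x y : V, 0 = 2 * nR x y w x y - nR x y y x w := by
  intro w x y
  have hlin := szabo_polarized nR hS x y w x
  rw [apply_self_left_eq_zero nR hnR1, apply_swap_right nR hnR1 hnR2 x y y w x] at hlin
  have hswap := apply_swap_right nR hnR1 hnR2 x y x w y
  linear_combination hnR4 x y y x w + hlin - 2 * hswap

/-- Polarizing `∇R(x,y,y,w;y) = 0` and using the curvature symmetries yields
`0 = 2∇R(x,y,w,x;y) - ∇R(x,y,y,x;w)`. -/
theorem szabo_polarization_identity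
    (V : Type*) [AddCommGroup V] [Module ℝ V]
    (nR : V →ₗ[ℝ] V →ₗ[ℝ] V →ₗ[ℝ] V →ₗ[ℝ] V →ₗ[ℝ] ℝ)
    (hnR1 : ∀ a b c d e, nR a b c d e = - nR b a c d e)
    (hnR2 : ∀ a b c d e, nR a b c d e = nR c d a b e)
    (hnR3 : ∀ a b c d e, nR a b c d e + nR a c d b e + nR a d b c e = 0)
    (hnR4 : ∀ a b c d e, nR a b c d e + nR a b d e c + nR a b e c d = 0)
    (hS : ∀ x y w, nR x y y w y = 0) :
    ∀ w x y : V, 0 = 2 * nR x y w x y - nR x y y x w :=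
  szabo_polarization_identity_general V nR hnR1 hnR2 hnR4 hS
end

section
/- There exists, on any vector space V of signature (p,q) with p,q ≥ 2, a covariant derivative algebraic curvature tensor ∇R whose Szabó operator satisfies S(x)² = 0 for every x ∈ V, yet S does not vanish identically. -/
/-! With `fᵢ = (eᵢ⁻)* + (eᵢ⁺)*`, the paper's tensor is `∑ᵢⱼ` of a Kulkarni–Nomizu-type product
of `fᵢ³` with `fⱼ²`; each such product satisfies the four symmetries by a polynomial identity.
The `B`-duals `uᵢ = eᵢ⁺ - eᵢ⁻` of the `fᵢ` are killed by every `fₖ`. Every summand of `S(x) y` is a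
multiple of some `uᵢ` whose coefficient depends on `y` only through the `fₖ y`, so `S(x)` maps `V`
into `N = span {uᵢ}` and kills `N`: hence `S(x)² = 0`. At `x = e₁⁺`, `y = e₂⁺` one gets
`S(x) y = u₂ ≠ 0`. -/

open Module

section CovariantKN

variable {R V : Type*} [CommRing R] [AddCommGroup V] [Module R V]

structure IsCovDerivCurvatureTensor
    (nR : V →ₗ[R] V →ₗ[R] V →ₗ[R] V →ₗ[R] V →ₗ[R] R) : Prop where
  antisymm : ∀ a b c d f, nR a b c d f = - nR b a c d f
  pair_symm : ∀ a b c d f, nR a b c d f = nR c d a b f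
  bianchi₁ : ∀ a b c d f, nR a b c d f + nR a c d b f + nR a d b c f = 0
  bianchi₂ : ∀ a b c d f, nR a b c d f + nR a b d f c + nR a b f c d = 0

namespace IsCovDerivCurvatureTensor

theorem zero : IsCovDerivCurvatureTensor (0 : V →ₗ[R] V →ₗ[R] V →ₗ[R] V →ₗ[R] V →ₗ[R] R) where
  antisymm := by simp
  pair_symm := by simp
  bianchi₁ := by simp
  bianchi₂ := by simp

theorem add {nR₁ nR₂ : V →ₗ[R] V →ₗ[R] V →ₗ[R] V →ₗ[R] V →ₗ[R] R}
    (h₁ : IsCovDerivCurvatureTensor nR₁) (h₂ : IsCovDerivCurvatureTensor nR₂) :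
    IsCovDerivCurvatureTensor (nR₁ + nR₂) where
  antisymm a b c d f := by
    simp only [LinearMap.add_apply]
    linear_combination h₁.antisymm a b c d f + h₂.antisymm a b c d f
  pair_symm a b c d f := by
    simp only [LinearMap.add_apply]
    linear_combination h₁.pair_symm a b c d f + h₂.pair_symm a b c d f
  bianchi₁ a b c d f := by
    simp only [LinearMap.add_apply]
    linear_combination h₁.bianchi₁ a b c d f + h₂.bianchi₁ a b c d f
  bianchi₂ a b c d f := by
    simp only [LinearMap.add_apply]
    linear_combination h₁.bianchi₂ a b c d f + h₂.bianchi₂ a b c d f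

theorem sum {ι : Type*} (s : Finset ι)
    {nR : ι → V →ₗ[R] V →ₗ[R] V →ₗ[R] V →ₗ[R] V →ₗ[R] R}
    (h : ∀ i ∈ s, IsCovDerivCurvatureTensor (nR i)) :
    IsCovDerivCurvatureTensor (∑ i ∈ s, nR i) :=
  Finset.sum_induction nR _ (fun _ _ => add) zero h

end IsCovDerivCurvatureTensor

def dualProd5 (g₁ g₂ g₃ g₄ g₅ : Dual R V) :
    V →ₗ[R] V →ₗ[R] V →ₗ[R] V →ₗ[R] V →ₗ[R] R :=
  g₁.smulRight (g₂.smulRight (g₃.smulRight (g₄.smulRight g₅)))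

@[simp]
theorem dualProd5_apply (g₁ g₂ g₃ g₄ g₅ : Dual R V) (a b c d f : V) :
    dualProd5 g₁ g₂ g₃ g₄ g₅ a b c d f = g₁ a * (g₂ b * (g₃ c * (g₄ d * g₅ f))) := by
  simp [dualProd5]

/-- The paper's `R̃` for `L̃ = g ⊗ g ⊗ g` and `L = h ⊗ h`. The signs sit in the functionals because
subtraction of iterated linear maps hits an instance diamond that elaboration does not resolve. -/
def covKN (g h : Dual R V) : V →ₗ[R] V →ₗ[R] V →ₗ[R] V →ₗ[R] V →ₗ[R] R :=
  dualProd5 h g g h g + dualProd5 (-g) h g h g + dualProd5 g h h g g + dualProd5 (-h) g h g g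

theorem covKN_apply (g h : Dual R V) (a b c d f : V) :
    covKN g h a b c d f = g f * g b * g c * (h a * h d) - g f * g a * g c * (h b * h d)
      + g f * g a * g d * (h b * h c) - g f * g b * g d * (h a * h c) := by
  simp only [covKN, LinearMap.add_apply, dualProd5_apply, LinearMap.neg_apply]
  ring

theorem isCovDerivCurvatureTensor_covKN (g h : Dual R V) :
    IsCovDerivCurvatureTensor (covKN g h) where
  antisymm a b c d f := by simp only [covKN_apply]; ring
  pair_symm a b c d f := by simp only [covKN_apply]; ring
  bianchi₁ a b c d f := by simp only [covKN_apply]; ring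
  bianchi₂ a b c d f := by simp only [covKN_apply]; ring

def szaboKN (g h : Dual R V) (u v x : V) : Module.End R V :=
  (g x ^ 3) • h.smulRight v - (g x ^ 2 * h x) • g.smulRight v
    + (g x * h x ^ 2) • g.smulRight u - (g x ^ 2 * h x) • h.smulRight u

theorem szaboKN_apply (g h : Dual R V) (u v x y : V) :
    szaboKN g h u v x y = (g x ^ 3 * h y - g x ^ 2 * h x * g y) • v
      + (g x * h x ^ 2 * g y - g x ^ 2 * h x * h y) • u := by
  simp only [szaboKN, LinearMap.add_apply, LinearMap.sub_apply, LinearMap.smul_apply,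
    LinearMap.smulRight_apply, smul_smul, sub_smul]
  abel

theorem bilin_szaboKN (B : LinearMap.BilinForm R V) {g h : Dual R V} {u v : V}
    (hu : B u = g) (hv : B v = h) (x y w : V) :
    B (szaboKN g h u v x y) w = covKN g h y x x w x := by
  simp only [szaboKN_apply, map_add, map_smul, LinearMap.add_apply, LinearMap.smul_apply,
    hu, hv, smul_eq_mul, covKN_apply]
  ring

variable {ι : Type*} [Fintype ι]

/-- The paper's `R̃` for `L̃ = ∑ᵢ fᵢ ⊗ fᵢ ⊗ fᵢ` and `L = ∑ⱼ fⱼ ⊗ fⱼ`. -/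
def covKNSum (f : ι → Dual R V) : V →ₗ[R] V →ₗ[R] V →ₗ[R] V →ₗ[R] V →ₗ[R] R :=
  ∑ i, ∑ j, covKN (f i) (f j)

theorem isCovDerivCurvatureTensor_covKNSum (f : ι → Dual R V) :
    IsCovDerivCurvatureTensor (covKNSum f) :=
  .sum _ fun i _ => .sum _ fun j _ => isCovDerivCurvatureTensor_covKN (f i) (f j)

def szabo (f : ι → Dual R V) (u : ι → V) (x : V) : Module.End R V :=
  ∑ i, ∑ j, szaboKN (f i) (f j) (u i) (u j) x

theorem bilin_szabo (B : LinearMap.BilinForm R V) {f : ι → Dual R V} {u : ι → V}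
    (hu : ∀ i, B (u i) = f i) (x y w : V) :
    B (szabo f u x y) w = covKNSum f y x x w x := by
  simp only [szabo, covKNSum, LinearMap.sum_apply, map_sum, bilin_szaboKN B (hu _) (hu _)]

theorem szabo_sq_eq_zero {f : ι → Dual R V} {u : ι → V} (hfu : ∀ i k, f i (u k) = 0)
    (x : V) : szabo f u x ^ 2 = 0 := by
  set N := Submodule.span R (Set.range u)
  have hf : ∀ i, ∀ n ∈ N, f i n = 0 := fun i =>
    (Submodule.span_le (p := LinearMap.ker (f i))).2 (Set.range_subset_iff.2 (hfu i))
  have hrange : ∀ y, szabo f u x y ∈ N := fun y => by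
    simp only [szabo, LinearMap.sum_apply, szaboKN_apply]
    exact Submodule.sum_mem _ fun i _ => Submodule.sum_mem _ fun j _ =>
      N.add_mem (N.smul_mem _ (Submodule.subset_span ⟨j, rfl⟩))
        (N.smul_mem _ (Submodule.subset_span ⟨i, rfl⟩))
  have hker : ∀ n ∈ N, szabo f u x n = 0 := fun n hn => by
    simp [szabo, szaboKN_apply, hf _ n hn]
  ext y
  rw [pow_two, Module.End.mul_apply, hker _ (hrange y), LinearMap.zero_apply]

theorem szabo_apply_eq [DecidableEq ι] {f : ι → Dual R V} (u : ι → V) {i j : ι} (hij : i ≠ j)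
    {x y : V} (hx : ∀ k, f k x = if k = i then 1 else 0)
    (hy : ∀ k, f k y = if k = j then 1 else 0) :
    szabo f u x y = u j := by
  rw [szabo, LinearMap.sum_apply, Fintype.sum_eq_single i, LinearMap.sum_apply,
    Fintype.sum_eq_single j]
  · simp [szaboKN_apply, hx, hy, hij, hij.symm]
  · intro b hb
    simp [szaboKN_apply, hx, hy, hb, hij]
  · intro a ha
    simp [szaboKN_apply, hx, ha]

theorem szabo_ne_zero [Nontrivial R] [DecidableEq ι] (B : LinearMap.BilinForm R V)
    {f : ι → Dual R V} {u : ι → V} (hu : ∀ i, B (u i) = f i) {i j : ι} (hij : i ≠ j)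
    {x y : V} (hx : ∀ k, f k x = if k = i then 1 else 0)
    (hy : ∀ k, f k y = if k = j then 1 else 0) :
    szabo f u x ≠ 0 := by
  intro hS
  have huj : u j = 0 := by rw [← szabo_apply_eq u hij hx hy, hS, LinearMap.zero_apply]
  have hyj := hy j
  rw [← hu j, huj, map_zero, LinearMap.zero_apply, if_pos rfl] at hyj
  exact zero_ne_one hyj

end CovariantKN

section SignatureBasis

variable {R V : Type*} [CommRing R] [AddCommGroup V] [Module R V] {p q n : ℕ}

def timelikeIndex (hp : n ≤ p) (i : Fin n) : Fin (p + q) := Fin.castAdd q (Fin.castLE hp i)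

def spacelikeIndex (hq : n ≤ q) (i : Fin n) : Fin (p + q) := Fin.natAdd p (Fin.castLE hq i)

theorem timelikeIndex_lt (hp : n ≤ p) (i : Fin n) : (timelikeIndex (q := q) hp i : ℕ) < p := by
  simp [timelikeIndex]; omega

theorem not_spacelikeIndex_lt (hq : n ≤ q) (i : Fin n) :
    ¬ (spacelikeIndex (p := p) hq i : ℕ) < p := by
  simp [spacelikeIndex]

theorem timelikeIndex_injective (hp : n ≤ p) : Function.Injective (timelikeIndex (q := q) hp) :=
  fun i k h => by simpa [timelikeIndex, Fin.ext_iff] using h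

theorem spacelikeIndex_injective (hq : n ≤ q) : Function.Injective (spacelikeIndex (p := p) hq) :=
  fun i k h => by simpa [spacelikeIndex, Fin.ext_iff] using h

theorem timelikeIndex_ne_spacelikeIndex (hp : n ≤ p) (hq : n ≤ q) (i k : Fin n) :
    timelikeIndex hp i ≠ spacelikeIndex hq k :=
  fun h => not_spacelikeIndex_lt hq k (h ▸ timelikeIndex_lt hp i)

variable {B : LinearMap.BilinForm R V} {e : Basis (Fin (p + q)) R V}

theorem bilin_basis_eq (hBe : ∀ i j, B (e i) (e j) =
      if i = j then (if (i : ℕ) < p then (-1 : R) else 1) else 0) (a : Fin (p + q)) :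
    B (e a) = if (a : ℕ) < p then -e.coord a else e.coord a :=
  e.ext fun b => by
    obtain rfl | hab := eq_or_ne a b
    · split_ifs <;> simp [*]
    · split_ifs <;> simp [hBe, hab]

variable (e)

noncomputable def nullCoord (hp : n ≤ p) (hq : n ≤ q) (i : Fin n) : Dual R V :=
  e.coord (timelikeIndex hp i) + e.coord (spacelikeIndex hq i)

noncomputable def nullVec (hp : n ≤ p) (hq : n ≤ q) (i : Fin n) : V :=
  e (spacelikeIndex hq i) - e (timelikeIndex hp i)

theorem bilin_nullVec (hBe : ∀ i j, B (e i) (e j) =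
      if i = j then (if (i : ℕ) < p then (-1 : R) else 1) else 0)
    (hp : n ≤ p) (hq : n ≤ q) (i : Fin n) : B (nullVec e hp hq i) = nullCoord e hp hq i := by
  rw [nullVec, nullCoord, map_sub, bilin_basis_eq hBe, bilin_basis_eq hBe,
    if_neg (not_spacelikeIndex_lt hq i), if_pos (timelikeIndex_lt hp i), sub_neg_eq_add, add_comm]

theorem nullCoord_nullVec (hp : n ≤ p) (hq : n ≤ q) (i k : Fin n) :
    nullCoord e hp hq i (nullVec e hp hq k) = 0 := by
  simp [nullVec, nullCoord, Finsupp.single_apply, timelikeIndex_ne_spacelikeIndex,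
    (timelikeIndex_ne_spacelikeIndex _ _ _ _).symm, (timelikeIndex_injective hp).eq_iff,
    (spacelikeIndex_injective hq).eq_iff]

theorem nullCoord_basis_spacelikeIndex (hp : n ≤ p) (hq : n ≤ q) (i k : Fin n) :
    nullCoord e hp hq k (e (spacelikeIndex hq i)) = if k = i then 1 else 0 := by
  simp [nullCoord, Finsupp.single_apply, (timelikeIndex_ne_spacelikeIndex _ _ _ _).symm,
    (spacelikeIndex_injective hq).eq_iff, eq_comm]

end SignatureBasis

theorem exists_szabo_square_zero_nonzero_general
    (V : Type*) [AddCommGroup V] [Module ℝ V]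
    (p q : ℕ) (hp : 2 ≤ p) (hq : 2 ≤ q)
    (B : LinearMap.BilinForm ℝ V)
    (e : Module.Basis (Fin (p + q)) ℝ V)
    (hBe : ∀ i j, B (e i) (e j) =
      if i = j then (if (i : ℕ) < p then (-1 : ℝ) else 1) else 0) :
    ∃ (nR : V →ₗ[ℝ] V →ₗ[ℝ] V →ₗ[ℝ] V →ₗ[ℝ] V →ₗ[ℝ] ℝ)
      (S : V → Module.End ℝ V),
      (∀ a b c d f, nR a b c d f = - nR b a c d f) ∧
      (∀ a b c d f, nR a b c d f = nR c d a b f) ∧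
      (∀ a b c d f, nR a b c d f + nR a c d b f + nR a d b c f = 0) ∧
      (∀ a b c d f, nR a b c d f + nR a b d f c + nR a b f c d = 0) ∧
      (∀ x y w, B (S x y) w = nR y x x w x) ∧
      (∀ x : V, (S x) ^ 2 = 0) ∧
      (∃ x : V, S x ≠ 0) := by
  have hR := isCovDerivCurvatureTensor_covKNSum (nullCoord e hp hq)
  have hu := bilin_nullVec e hBe hp hq
  refine ⟨_, szabo (nullCoord e hp hq) (nullVec e hp hq), hR.antisymm, hR.pair_symm,
    hR.bianchi₁, hR.bianchi₂, bilin_szabo B hu, szabo_sq_eq_zero (nullCoord_nullVec e hp hq),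
    e (spacelikeIndex hq 0), szabo_ne_zero B hu (i := 0) (j := 1) (by decide)
      (nullCoord_basis_spacelikeIndex e hp hq 0) (nullCoord_basis_spacelikeIndex e hp hq 1)⟩

/-- On any vector space of signature `(p,q)` with `p,q ≥ 2` there exists a covariant
derivative algebraic curvature tensor whose Szabó operator `S` satisfies `S(x)² = 0`
for every `x`, yet `S` does not vanish identically. -/
theorem exists_szabo_square_zero_nonzero
    (V : Type*) [AddCommGroup V] [Module ℝ V] [FiniteDimensional ℝ V]
    (p q : ℕ) (hp : 2 ≤ p) (hq : 2 ≤ q)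
    (B : LinearMap.BilinForm ℝ V) (hBsymm : ∀ x y, B x y = B y x)
    (e : Module.Basis (Fin (p + q)) ℝ V)
    (hBe : ∀ i j, B (e i) (e j) =
      if i = j then (if (i : ℕ) < p then (-1 : ℝ) else 1) else 0) :
    ∃ (nR : V →ₗ[ℝ] V →ₗ[ℝ] V →ₗ[ℝ] V →ₗ[ℝ] V →ₗ[ℝ] ℝ)
      (S : V → Module.End ℝ V),
      (∀ a b c d f, nR a b c d f = - nR b a c d f) ∧
      (∀ a b c d f, nR a b c d f = nR c d a b f) ∧
      (∀ a b c d f, nR a b c d f + nR a c d b f + nR a d b c f = 0) ∧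
      (∀ a b c d f, nR a b c d f + nR a b d f c + nR a b f c d = 0) ∧
      (∀ x y w, B (S x y) w = nR y x x w x) ∧
      (∀ x : V, (S x) ^ 2 = 0) ∧
      (∃ x : V, S x ≠ 0) :=
  exists_szabo_square_zero_nonzero_general V p q hp hq B e hBe
end

section
/- Let R be a k-Osserman algebraic curvature tensor on a vector space of signature (p,q). Let σ be a nondegenerate (k-1)-plane and x_t = x₁ + t x₂ with x₁ complex null, (x₁,x₂)≠0, x₁,x₂ orthogonal to σ. Set g(t)=(x_t,x_t). Then for all small t>0 with g(t)≠0, g(t)^i c_i = trace{[g(t)J_R(σ) + J_R(x_t)]^i}, where c_i = trace{J_R(π)^i} for any nondegenerate k-plane π; taking t→0 yields trace{J_R(x₁)^i} = 0. -/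
/-!
For `g(t) ≠ 0`, rescaling `x_t` by a square root of `g(t)` extends the frame of `σ` to an
orthonormal `k`-frame; as `J_R` is quadratic, the `k`-Osserman hypothesis becomes the stated
identity. Both of its sides are polynomials in `t` (the trace side through the matrix entries of
the quadratic pencil `g(t) J_R(σ) + J_R(x_t)`), and they agree off the finitely many roots of the
nonzero polynomial `g`, hence everywhere. At `t = 0` the left side vanishes because `g(0) = 0`.
-/

open Polynomial

theorem Polynomial.eq_of_eval_eq_of_eval_ne_zero {R : Type*} [CommRing R] [IsDomain R] [Infinite R]
    {g p q : R[X]} (hg : g ≠ 0) (h : ∀ t, g.eval t ≠ 0 → p.eval t = q.eval t) : p = q :=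
  eq_of_infinite_eval_eq p q <|
    (finite_setOfPred_isRoot hg).infinite_compl.mono fun t ht => h t ht

theorem LinearMap.exists_polynomial_eval_eq_trace_pow {R M : Type*} [CommRing R] [AddCommGroup M]
    [Module R M] [Module.Free R M] [Module.Finite R M] {n : ℕ} (N : Fin n → Module.End R M)
    (i : ℕ) :
    ∃ q : R[X], ∀ t : R, q.eval t = trace R M ((∑ j : Fin n, t ^ (j : ℕ) • N j) ^ i) := by
  classical
  let b := Module.Free.chooseBasis R M
  let ψ := LinearMap.toMatrixAlgEquiv b
  let P := ∑ j : Fin n, (X ^ (j : ℕ) : R[X]) • (ψ (N j)).map C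
  refine ⟨(P ^ i).trace, fun t => ?_⟩
  have hP : (evalRingHom t).mapMatrix P = ψ (∑ j : Fin n, t ^ (j : ℕ) • N j) := by
    ext a c
    simp [P, Matrix.sum_apply, mul_comm (t ^ (_ : ℕ))]
  rw [trace_eq_matrix_trace R b]
  change _ = (ψ _).trace
  rw [map_pow, ← hP, ← map_pow, ← coe_evalRingHom, AddMonoidHom.map_trace]
  rfl

theorem LinearMap.trace_pow_eq_zero_of_quadratic_pencil {K V : Type*} [Field K] [Infinite K]
    [AddCommGroup V] [Module K V] [FiniteDimensional K V] {a b γ : K} (ha : a ≠ 0)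
    (A₀ A₁ A₂ : Module.End K V) {i : ℕ} (hi : i ≠ 0)
    (h : ∀ t : K, a * t + b * t ^ 2 ≠ 0 →
      (a * t + b * t ^ 2) ^ i * γ = trace K V ((A₀ + t • A₁ + t ^ 2 • A₂) ^ i)) :
    trace K V (A₀ ^ i) = 0 := by
  obtain ⟨q, hq⟩ := exists_polynomial_eval_eq_trace_pow ![A₀, A₁, A₂] i
  have hpencil (t : K) :
      ∑ j : Fin 3, t ^ (j : ℕ) • ![A₀, A₁, A₂] j = A₀ + t • A₁ + t ^ 2 • A₂ := by
    simp [Fin.sum_univ_three]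
  let G : K[X] := C a * X + C b * X ^ 2
  have hG (t : K) : G.eval t = a * t + b * t ^ 2 := by simp [G]
  have hG0 : G ≠ 0 := fun h => by simpa [G, ha] using congrArg (coeff · 1) h
  have hpoly : G ^ i * C γ = q := eq_of_eval_eq_of_eval_ne_zero hG0 fun t ht => by
    rw [hG] at ht
    rw [eval_mul, eval_pow, eval_C, hG, hq, hpencil]
    exact h t ht
  simpa [G, hq, hpencil, zero_pow hi, eq_comm] using congrArg (eval 0) hpoly

theorem LinearMap.BilinForm.Nondegenerate.ext_end {R M : Type*} [CommRing R] [AddCommGroup M]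
    [Module R M] {B : LinearMap.BilinForm R M} (hB : B.Nondegenerate) {S T : Module.End R M}
    (h : ∀ y w, B (S y) w = B (T y) w) : S = T :=
  LinearMap.ext fun y => LinearMap.ker_eq_bot.mp hB.ker_eq_bot (LinearMap.ext (h y))

section JacobiOperator

variable {K V : Type*} [Field K] [AddCommGroup V] [Module K V] {B : LinearMap.BilinForm K V}

theorem LinearMap.BilinForm.apply_add_smul_self_s16 {x y : V} (hyx : B y x = B x y) (t : K) :
    B (x + t • y) (x + t • y) = B x x + 2 * B x y * t + B y y * t ^ 2 := by
  simp only [map_add, map_smul, LinearMap.add_apply, LinearMap.smul_apply, smul_eq_mul, hyx]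
  ring

def IsOrthonormalFrame (B : LinearMap.BilinForm K V) {ι : Type*} [DecidableEq ι] (f : ι → V) :
    Prop :=
  ∀ i j, B (f i) (f j) = if i = j then 1 else 0

theorem IsOrthonormalFrame.snoc (hBsymm : ∀ x y, B x y = B y x) {m : ℕ} {e : Fin m → V}
    (he : IsOrthonormalFrame B e) {v : V} (hv : B v v = 1) (hperp : ∀ i, B v (e i) = 0) :
    IsOrthonormalFrame B (Fin.snoc e v : Fin (m + 1) → V) := by
  intro i j
  induction i using Fin.lastCases <;> induction j using Fin.lastCases
  · simp [hv]
  · simp [hperp, (Fin.castSucc_lt_last _).ne']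
  · simp [hBsymm _ v, hperp, (Fin.castSucc_lt_last _).ne]
  · simp [he _ _]

variable {Rm : V →ₗ[K] V →ₗ[K] V →ₗ[K] V →ₗ[K] K} {J : V → Module.End K V}

theorem jacobi_smul (hB : B.Nondegenerate) (hJ : ∀ x y w, B (J x y) w = Rm y x x w) (z : K)
    (x : V) : J (z • x) = z ^ 2 • J x :=
  hB.ext_end fun y w => by
    simp only [hJ, map_smul, LinearMap.smul_apply, smul_eq_mul]
    ring

theorem jacobi_add_smul (hB : B.Nondegenerate) (hJ : ∀ x y w, B (J x y) w = Rm y x x w)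
    (x y : V) (t : K) : J (x + t • y) = J x + t • (J (x + y) - J x - J y) + t ^ 2 • J y :=
  hB.ext_end fun u w => by
    simp only [hJ, map_add, map_sub, map_smul, LinearMap.add_apply, LinearMap.sub_apply,
      LinearMap.smul_apply, smul_eq_mul]
    ring

theorem pow_mul_eq_trace_pow_smul_add_jacobi [IsAlgClosed K] (hB : B.Nondegenerate)
    (hBsymm : ∀ x y, B x y = B y x) (hJ : ∀ x y w, B (J x y) w = Rm y x x w) {m : ℕ}
    {c : ℕ → K} (hOss : ∀ f : Fin (m + 1) → V, IsOrthonormalFrame B f →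
      ∀ i : ℕ, LinearMap.trace K V ((∑ a, J (f a)) ^ i) = c i)
    {e : Fin m → V} (he : IsOrthonormalFrame B e) {x : V} (hx : B x x ≠ 0)
    (hperp : ∀ a, B x (e a) = 0) (i : ℕ) :
    B x x ^ i * c i = LinearMap.trace K V ((B x x • ∑ a, J (e a) + J x) ^ i) := by
  obtain ⟨s, hs⟩ := IsAlgClosed.exists_pow_nat_eq (B x x) two_pos
  have hs0 : s ≠ 0 := by rintro rfl; simp_all
  have hv : B (s⁻¹ • x) (s⁻¹ • x) = 1 := by
    simp only [map_smul, LinearMap.smul_apply, smul_eq_mul, ← hs]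
    field_simp
  have hframe := he.snoc hBsymm hv fun a => by simp [hperp]
  have hsum : B x x • ∑ a, J ((Fin.snoc e (s⁻¹ • x) : Fin (m + 1) → V) a)
      = B x x • ∑ a, J (e a) + J x := by
    rw [Fin.sum_univ_castSucc]
    simp only [Fin.snoc_castSucc, Fin.snoc_last, jacobi_smul hB hJ, smul_add, smul_smul, ← hs]
    rw [inv_pow, mul_inv_cancel₀ (pow_ne_zero 2 hs0), one_smul]
  rw [← hsum, _root_.smul_pow, map_smul, hOss _ hframe, smul_eq_mul]

end JacobiOperator

theorem kOsserman_limit_computation_general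
    (V : Type*) [AddCommGroup V] [Module ℂ V] [FiniteDimensional ℂ V]
    (B : LinearMap.BilinForm ℂ V) (hBsymm : ∀ x y, B x y = B y x)
    (hBnd : B.Nondegenerate)
    (R : V →ₗ[ℂ] V →ₗ[ℂ] V →ₗ[ℂ] V →ₗ[ℂ] ℂ)
    (J : V → Module.End ℂ V)
    (hJ : ∀ x y w, B (J x y) w = R y x x w)
    (k : ℕ) (hk1 : 1 ≤ k)
    (c : ℕ → ℂ)
    (hOss : ∀ f : Fin k → V, (∀ i j, B (f i) (f j) = if i = j then 1 else 0) →
      ∀ i : ℕ, LinearMap.trace ℂ V ((∑ a, J (f a)) ^ i) = c i)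
    (e : Fin (k - 1) → V)
    (he : ∀ i j, B (e i) (e j) = if i = j then 1 else 0)
    (x₁ x₂ : V) (hx₁ : B x₁ x₁ = 0) (hx₁₂ : B x₁ x₂ ≠ 0)
    (hperp₁ : ∀ i, B x₁ (e i) = 0) (hperp₂ : ∀ i, B x₂ (e i) = 0) :
    (∀ t : ℂ, B (x₁ + t • x₂) (x₁ + t • x₂) ≠ 0 → ∀ i : ℕ,
      (B (x₁ + t • x₂) (x₁ + t • x₂)) ^ i * c i =
        LinearMap.trace ℂ V
          ((B (x₁ + t • x₂) (x₁ + t • x₂) • (∑ a, J (e a)) + J (x₁ + t • x₂)) ^ i)) ∧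
    (∀ i : ℕ, 1 ≤ i → LinearMap.trace ℂ V ((J x₁) ^ i) = 0) := by
  -- `Fin.snoc` extends the frame `e : Fin (k - 1) → V` to `Fin (k - 1 + 1)`, not `Fin k`
  rw [← Nat.sub_add_cancel hk1] at hOss
  have hg (t : ℂ) : B (x₁ + t • x₂) (x₁ + t • x₂) = 2 * B x₁ x₂ * t + B x₂ x₂ * t ^ 2 := by
    rw [B.apply_add_smul_self_s16 (hBsymm x₂ x₁), hx₁, zero_add]
  have identity (t : ℂ) (ht : B (x₁ + t • x₂) (x₁ + t • x₂) ≠ 0) (i : ℕ) :=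
    pow_mul_eq_trace_pow_smul_add_jacobi hBnd hBsymm hJ hOss he ht
      (fun a => by simp [hperp₁, hperp₂]) i
  refine ⟨identity, fun i hi => LinearMap.trace_pow_eq_zero_of_quadratic_pencil
    (b := B x₂ x₂) (γ := c i) (mul_ne_zero two_ne_zero hx₁₂) (J x₁)
    (J (x₁ + x₂) - J x₁ - J x₂ + (2 * B x₁ x₂) • ∑ a, J (e a)) (J x₂ + B x₂ x₂ • ∑ a, J (e a))
    (by omega) fun t ht => ?_⟩
  rw [← hg] at ht ⊢
  convert identity t ht i using 3
  rw [hg, jacobi_add_smul hBnd hJ]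
  module

/-- The key computation in the proof that a `k`-Osserman curvature tensor has nilpotent
Jacobi operator on null vectors: with `σ` a (complex) orthonormal `(k-1)`-frame,
`x₁` null, `(x₁,x₂) ≠ 0`, `x₁,x₂ ⟂ σ`, `x_t = x₁ + t x₂`, `g(t) = (x_t,x_t)`, one has
`g(t)^i c_i = trace{[g(t)J_R(σ) + J_R(x_t)]^i}` whenever `g(t) ≠ 0`, and letting
`t → 0` gives `trace{J_R(x₁)^i} = 0`. -/
theorem kOsserman_limit_computation
    (V : Type*) [AddCommGroup V] [Module ℂ V] [FiniteDimensional ℂ V]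
    (B : LinearMap.BilinForm ℂ V) (hBsymm : ∀ x y, B x y = B y x)
    (hBnd : B.Nondegenerate)
    (R : V →ₗ[ℂ] V →ₗ[ℂ] V →ₗ[ℂ] V →ₗ[ℂ] ℂ)
    (hR1 : ∀ x y z w, R x y z w = R z w x y)
    (hR2 : ∀ x y z w, R x y z w = - R y x z w)
    (hR3 : ∀ x y z w, R x y z w + R y z x w + R z x y w = 0)
    (J : V → Module.End ℂ V)
    (hJ : ∀ x y w, B (J x y) w = R y x x w)
    (k : ℕ) (hk1 : 1 ≤ k) (hkm : k ≤ Module.finrank ℂ V - 1)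
    (c : ℕ → ℂ)
    (hOss : ∀ f : Fin k → V, (∀ i j, B (f i) (f j) = if i = j then 1 else 0) →
      ∀ i : ℕ, LinearMap.trace ℂ V ((∑ a, J (f a)) ^ i) = c i)
    (e : Fin (k - 1) → V)
    (he : ∀ i j, B (e i) (e j) = if i = j then 1 else 0)
    (x₁ x₂ : V) (hx₁ : B x₁ x₁ = 0) (hx₁₂ : B x₁ x₂ ≠ 0)
    (hperp₁ : ∀ i, B x₁ (e i) = 0) (hperp₂ : ∀ i, B x₂ (e i) = 0) :
    (∀ t : ℂ, B (x₁ + t • x₂) (x₁ + t • x₂) ≠ 0 → ∀ i : ℕ,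
      (B (x₁ + t • x₂) (x₁ + t • x₂)) ^ i * c i =
        LinearMap.trace ℂ V
          ((B (x₁ + t • x₂) (x₁ + t • x₂) • (∑ a, J (e a)) + J (x₁ + t • x₂)) ^ i)) ∧
    (∀ i : ℕ, 1 ≤ i → LinearMap.trace ℂ V ((J x₁) ^ i) = 0) :=
  kOsserman_limit_computation_general V B hBsymm hBnd R J hJ k hk1 c hOss e he x₁ x₂ hx₁ hx₁₂ hperp₁
    hperp₂
end
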